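/- Let (A,j)_K be a net of C*-algebras over a simply connected poset K. Then the enveloping net bundle (Ā,j̄)_K of (A,j)_K is canonically isomorphic to the constant net bundle whose fibre is Fredenhagen's universal C*-algebra A^u of (A,j)_K. In particular, if K is upward directed, then A^u is isomorphic to the C*-inductive limit of (A,j)_K. -/

import Mathlib

noncomputable section

universe u v w u' v' w' u'' v'' w''

namespace AQFT

/-! ### Simplices and paths in a poset -/

structure Simplex1 (K : Type u) [PartialOrder K] : Type u where
  supp : K
  d0 : K
  d1 : K
  le0 : d0 ≤ supp
  le1 : d1 ≤ supp

namespace Simplex1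

variable {K : Type u} [PartialOrder K]

def op (s : Simplex1 K) : Simplex1 K := ⟨s.supp, s.d1, s.d0, s.le1, s.le0⟩

def deg (a : K) : Simplex1 K := ⟨a, a, a, le_rfl, le_rfl⟩

def map {L : Type u'} [PartialOrder L] (f : K →o L) (s : Simplex1 K) : Simplex1 L :=
  ⟨f s.supp, f s.d0, f s.d1, f.monotone s.le0, f.monotone s.le1⟩

end Simplex1

structure Simplex2 (K : Type u) [PartialOrder K] : Type u where
  supp : K
  d0 : Simplex1 K
  d1 : Simplex1 K
  d2 : Simplex1 K
  le0 : d0.supp ≤ supp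
  le1 : d1.supp ≤ supp
  le2 : d2.supp ≤ supp
  h00 : d0.d0 = d1.d0
  h11 : d1.d1 = d2.d1
  h10 : d0.d1 = d2.d0

inductive SPath (K : Type u) [PartialOrder K] : K → K → Type u
  | nil (a : K) : SPath K a a
  | cons {a b c : K} (p : SPath K a b) (s : Simplex1 K) (h1 : s.d1 = b) (h0 : s.d0 = c) :
      SPath K a c

namespace SPath

variable {K : Type u} [PartialOrder K]

/-- The path consisting of a single 1-simplex. -/
def single {a b : K} (s : Simplex1 K) (h1 : s.d1 = a) (h0 : s.d0 = b) : SPath K a b :=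
  .cons (.nil a) s h1 h0

/-- Composition of paths: first traverse `p`, then `q`. -/
def comp {a b : K} (p : SPath K a b) : {c : K} → SPath K b c → SPath K a c
  | _, .nil _ => p
  | _, .cons q s h1 h0 => .cons (p.comp q) s h1 h0

/-- The opposite (reverse) of a path. -/
def reverse {a : K} : {b : K} → SPath K a b → SPath K b a
  | _, .nil _ => .nil a
  | _, .cons p s h1 h0 => (single s.op h0 h1).comp p.reverse

@[simp] theorem comp_nil {a b : K} (p : SPath K a b) : p.comp (.nil b) = p := rfl

@[simp] theorem nil_comp {a b : K} (p : SPath K a b) : (SPath.nil a).comp p = p := by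
  induction p with
  | nil => rfl
  | cons p s h1 h0 ih =>
      show SPath.cons ((SPath.nil _).comp p) s h1 h0 = _
      rw [ih]

theorem comp_assoc {a b c d : K} (p : SPath K a b) (q : SPath K b c) (r : SPath K c d) :
    (p.comp q).comp r = p.comp (q.comp r) := by
  induction r with
  | nil => rfl
  | cons r s h1 h0 ih =>
      show SPath.cons ((p.comp q).comp r) s h1 h0 = SPath.cons (p.comp (q.comp r)) s h1 h0
      rw [ih]

/-- All 1-simplices of the path have support `≤ o`. -/
def SuppLE (o : K) {a : K} : {b : K} → SPath K a b → Prop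
  | _, .nil _ => True
  | _, .cons p s _ _ => SuppLE o p ∧ s.supp ≤ o

/-- All supports and faces of the path belong to `P`. -/
def MemAll (P : Set K) {a : K} : {b : K} → SPath K a b → Prop
  | _, .nil _ => True
  | _, .cons p s _ _ => MemAll P p ∧ s.supp ∈ P ∧ s.d0 ∈ P ∧ s.d1 ∈ P

theorem SuppLE.comp {o : K} {a b c : K} {p : SPath K a b} {q : SPath K b c}
    (hp : SuppLE o p) (hq : SuppLE o q) : SuppLE o (p.comp q) := by
  induction q with
  | nil => exact hp
  | cons q s h1 h0 ih => exact ⟨ih hq.1, hq.2⟩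

theorem SuppLE.reverse {o : K} {a b : K} {p : SPath K a b} (hp : SuppLE o p) :
    SuppLE o p.reverse := by
  induction p with
  | nil => trivial
  | cons p s h1 h0 ih => exact SuppLE.comp ⟨trivial, hp.2⟩ (ih hp.1)

/-- Mapping paths along a monotone map. -/
def map {L : Type u'} [PartialOrder L] (f : K →o L) {a : K} :
    {b : K} → SPath K a b → SPath L (f a) (f b)
  | _, .nil _ => .nil (f a)
  | _, .cons p s h1 h0 => .cons (map f p) (s.map f) (congrArg f h1) (congrArg f h0)

/-- The path of the nerve 1-simplex associated with an inclusion `o ≤ a`. -/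
def nervePath {o a : K} (h : o ≤ a) : SPath K o a :=
  single ⟨a, a, o, le_rfl, h⟩ rfl rfl

/-! ### Homotopy of paths -/

inductive Homotopic : {a b : K} → SPath K a b → SPath K a b → Prop
  | refl {a b : K} (p : SPath K a b) : Homotopic p p
  | symm {a b : K} {p q : SPath K a b} : Homotopic p q → Homotopic q p
  | trans {a b : K} {p q r : SPath K a b} : Homotopic p q → Homotopic q r → Homotopic p r
  | comp_congr {a b c : K} {p p' : SPath K a b} {q q' : SPath K b c} :
      Homotopic p p' → Homotopic q q' → Homotopic (p.comp q) (p'.comp q')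
  | degen {a : K} (s : Simplex1 K) (h0 : s.d0 = a) (h1 : s.d1 = a) (hs : s.supp = a) :
      Homotopic (SPath.nil a) (single s h1 h0)
  | triangle {a b : K} (c : Simplex2 K) (h1 : c.d2.d1 = a) (h0 : c.d0.d0 = b) :
      Homotopic ((single c.d2 h1 rfl).comp (single c.d0 c.h10 h0))
        (single c.d1 (c.h11.trans h1) (c.h00.symm.trans h0))

theorem single_comp_op {a b : K} (s : Simplex1 K) (h1 : s.d1 = a) (h0 : s.d0 = b) :
    Homotopic ((single s h1 h0).comp (single s.op h0 h1)) (SPath.nil a) := by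
  subst h1; subst h0
  have ht := Homotopic.triangle
    (⟨s.supp, s.op, Simplex1.deg s.d1, s, le_rfl, s.le1, le_rfl, rfl, rfl, rfl⟩ : Simplex2 K)
    rfl rfl
  have hd := Homotopic.degen (K := K) (Simplex1.deg s.d1) rfl rfl rfl
  exact ht.trans hd.symm

theorem comp_reverse_self {a b : K} (p : SPath K a b) :
    Homotopic (p.comp p.reverse) (SPath.nil a) := by
  induction p with
  | nil => exact .refl _
  | cons p s h1 h0 ih =>
      show Homotopic ((p.comp (single s h1 h0)).comp ((single s.op h0 h1).comp p.reverse)) _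
      rw [comp_assoc, ← comp_assoc (single s h1 h0)]
      have h2 : Homotopic (((single s h1 h0).comp (single s.op h0 h1)).comp p.reverse)
          p.reverse := by
        have h3 := Homotopic.comp_congr (single_comp_op s h1 h0) (Homotopic.refl p.reverse)
        rwa [nil_comp] at h3
      exact (Homotopic.comp_congr (Homotopic.refl p) h2).trans ih

theorem reverse_comp_self {a b : K} (p : SPath K a b) :
    Homotopic (p.reverse.comp p) (SPath.nil b) := by
  induction p with
  | nil => exact .refl _
  | cons p s h1 h0 ih =>
      show Homotopic (((single s.op h0 h1).comp p.reverse).comp (p.comp (single s h1 h0))) _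
      rw [comp_assoc, ← comp_assoc p.reverse]
      have h2 : Homotopic ((p.reverse.comp p).comp (single s h1 h0)) (single s h1 h0) := by
        have h3 := Homotopic.comp_congr ih (Homotopic.refl (single s h1 h0))
        rwa [nil_comp] at h3
      have h4 : Homotopic ((single s.op h0 h1).comp ((p.reverse.comp p).comp (single s h1 h0)))
          ((single s.op h0 h1).comp (single s h1 h0)) :=
        Homotopic.comp_congr (Homotopic.refl _) h2
      exact h4.trans (single_comp_op s.op h0 h1)

theorem Homotopic.reverse_congr {a b : K} {p q : SPath K a b} (h : Homotopic p q) :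
    Homotopic p.reverse q.reverse := by
  have e1 : Homotopic p.reverse (p.reverse.comp (q.comp q.reverse)) :=
    Homotopic.comp_congr (Homotopic.refl p.reverse) (comp_reverse_self q).symm
  have e2 : Homotopic (p.reverse.comp (q.comp q.reverse)) ((p.reverse.comp p).comp q.reverse) := by
    rw [comp_assoc]
    exact Homotopic.comp_congr (Homotopic.refl _)
      (Homotopic.comp_congr h.symm (Homotopic.refl _))
  have e3 : Homotopic ((p.reverse.comp p).comp q.reverse) q.reverse := by
    have h3 := Homotopic.comp_congr (reverse_comp_self p) (Homotopic.refl q.reverse)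
    rwa [nil_comp] at h3
  exact (e1.trans e2).trans e3

end SPath

/-! ### The fundamental group of a poset -/

instance homotopySetoid (K : Type u) [PartialOrder K] (o : K) : Setoid (SPath K o o) where
  r := SPath.Homotopic
  iseqv := ⟨fun p => .refl p, fun h => h.symm, fun h h' => h.trans h'⟩

def Pi1 (K : Type u) [PartialOrder K] (o : K) : Type u := Quotient (homotopySetoid K o)

namespace Pi1

variable {K : Type u} [PartialOrder K] {o : K}

def mk (p : SPath K o o) : Pi1 K o := Quotient.mk _ p

instance : One (Pi1 K o) := ⟨mk (SPath.nil o)⟩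

instance : Mul (Pi1 K o) :=
  ⟨Quotient.map₂ (fun p q => q.comp p)
    (fun _ _ hp _ _ hq => SPath.Homotopic.comp_congr hq hp)⟩

instance : Inv (Pi1 K o) :=
  ⟨Quotient.map SPath.reverse (fun _ _ h => h.reverse_congr)⟩

instance : Group (Pi1 K o) where
  mul_assoc x y z := by
    refine Quotient.inductionOn₃ x y z ?_
    intro p q r
    show mk (r.comp (q.comp p)) = mk ((r.comp q).comp p)
    rw [SPath.comp_assoc]
  one_mul x := Quotient.inductionOn x fun p => rfl
  mul_one x := Quotient.inductionOn x fun p => congrArg mk (SPath.nil_comp p)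
  inv_mul_cancel x := Quotient.inductionOn x fun p => Quotient.sound (SPath.comp_reverse_self p)

end Pi1

/-! ### Nets of C*-algebras over a poset -/

open scoped ComplexOrder

variable {K : Type u} [PartialOrder K]

structure CStarNet (K : Type u) [PartialOrder K] where
  fib : K → Type v
  [cstar : ∀ o, CStarAlgebra (fib o)]
  incl : ∀ ⦃a o : K⦄, a ≤ o → (fib a →⋆ₐ[ℂ] fib o)
  incl_injective : ∀ ⦃a o : K⦄ (h : a ≤ o), Function.Injective (incl h)
  incl_comp : ∀ ⦃e a o : K⦄ (h1 : e ≤ a) (h2 : a ≤ o) (x : fib e),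
      incl h2 (incl h1 x) = incl (h1.trans h2) x

attribute [instance] CStarNet.cstar

/-- A C*-net bundle: all the inclusion maps are isomorphisms. -/
def IsCStarNetBundle (N : CStarNet.{u, v} K) : Prop :=
  ∀ ⦃a o : K⦄ (h : a ≤ o), Function.Bijective (N.incl h)

/-- Morphisms of nets over (possibly) different posets, over the poset map `f`. -/
def IsNetMorphism {K : Type u} {S : Type u'} [PartialOrder K] [PartialOrder S]
    (N : CStarNet.{u, v} K) (M : CStarNet.{u', v'} S) (f : K →o S)
    (φ : ∀ o : K, N.fib o →⋆ₐ[ℂ] M.fib (f o)) : Prop :=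
  ∀ ⦃a o : K⦄ (h : a ≤ o) (x : N.fib a), φ o (N.incl h x) = M.incl (f.monotone h) (φ a x)

/-- Morphisms of nets over the same poset (over the identity of the poset). -/
def IsNetMorphismOver (N : CStarNet.{u, v} K) (M : CStarNet.{u, v'} K)
    (φ : ∀ o : K, N.fib o →⋆ₐ[ℂ] M.fib o) : Prop :=
  ∀ ⦃a o : K⦄ (h : a ≤ o) (x : N.fib a), φ o (N.incl h x) = M.incl h (φ a x)

namespace CStarNet

def fibCast (N : CStarNet.{u, v} K) {a b : K} (h : a = b) : N.fib a ≃⋆ₐ[ℂ] N.fib b := by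
  subst h; exact StarAlgEquiv.refl ℂ _

/-- The isomorphism determined by an inclusion map of a C*-net bundle. -/
def holEquiv (N : CStarNet.{u, v} K) (hN : IsCStarNetBundle N) ⦃a o : K⦄ (h : a ≤ o) :
    N.fib a ≃⋆ₐ[ℂ] N.fib o :=
  StarAlgEquiv.ofBijective (N.incl h) (hN h)

/-- The 1-cocycle `j_b` associated with a 1-simplex `b` of the poset. -/
def hol1 (N : CStarNet.{u, v} K) (hN : IsCStarNetBundle N) (s : Simplex1 K) :
    N.fib s.d1 ≃⋆ₐ[ℂ] N.fib s.d0 :=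
  (N.holEquiv hN s.le1).trans (N.holEquiv hN s.le0).symm

/-- The extension `j_p` of the 1-cocycle from 1-simplices to paths. -/
def holPath (N : CStarNet.{u, v} K) (hN : IsCStarNetBundle N) {a : K} :
    {b : K} → SPath K a b → (N.fib a ≃⋆ₐ[ℂ] N.fib b)
  | _, .nil _ => StarAlgEquiv.refl ℂ _
  | _, .cons p s h1 h0 =>
      (holPath N hN p).trans (((N.fibCast h1.symm).trans (N.hol1 hN s)).trans (N.fibCast h0))

end CStarNet

/-- A net is trivial if it is isomorphic to a constant net bundle. -/
def IsTrivialNet (N : CStarNet.{u, v} K) : Prop :=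
  ∀ o₀ : K, ∃ τ : ∀ a, N.fib a ≃⋆ₐ[ℂ] N.fib o₀,
    ∀ ⦃a o : K⦄ (h : a ≤ o) (x : N.fib a), τ o (N.incl h x) = τ a x

/-- `(NB, ε)` is an enveloping net bundle of the net `N`. -/
def IsEnvelope (N : CStarNet.{u, v} K) (NB : CStarNet.{u, max u v} K)
    (ε : ∀ o, N.fib o →⋆ₐ[ℂ] NB.fib o) : Prop :=
  IsCStarNetBundle NB ∧ IsNetMorphismOver N NB ε ∧
    ∀ (M : CStarNet.{u, max u v} K), IsCStarNetBundle M →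
      ∀ ψ : ∀ o, N.fib o →⋆ₐ[ℂ] M.fib o, IsNetMorphismOver N M ψ →
        ∃! ψu : ∀ o, NB.fib o →⋆ₐ[ℂ] M.fib o,
          IsNetMorphismOver NB M ψu ∧ ∀ o x, ψu o (ε o x) = ψ o x

/-- The net `N` is nondegenerate w.r.t. the enveloping net bundle `NB`. -/
def IsNondegenerate (NB : CStarNet.{u, v'} K) : Prop :=
  ∀ o : K, Nontrivial (NB.fib o)

/-! ### States -/

/-- A state on a unital C*-algebra. -/
structure CStarAlgState (A : Type v) [CStarAlgebra A] where
  lin : A →ₗ[ℂ] ℂ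
  map_one : lin 1 = 1
  pos : ∀ a : A, 0 ≤ lin (star a * a)

/-- A state on a net of C*-algebras. -/
structure NetState (N : CStarNet.{u, v} K) where
  st : ∀ o, CStarAlgState (N.fib o)
  compat : ∀ ⦃o a : K⦄ (h : o ≤ a) (x : N.fib o), (st a).lin (N.incl h x) = (st o).lin x

/-! ### Representations -/

structure NetRep (N : CStarNet.{u, v} K) where
  H : K → Type w
  [nacg : ∀ o, NormedAddCommGroup (H o)]
  [ips : ∀ o, InnerProductSpace ℂ (H o)]
  [cpl : ∀ o, CompleteSpace (H o)]
  rep : ∀ o, N.fib o →⋆ₐ[ℂ] (H o →L[ℂ] H o)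
  U : ∀ ⦃o a : K⦄, o ≤ a → (H o ≃ₗᵢ[ℂ] H a)
  intertwine : ∀ ⦃o a : K⦄ (h : o ≤ a) (x : N.fib o) (v : H o),
      U h (rep o x v) = rep a (N.incl h x) (U h v)
  U_comp : ∀ ⦃o a e : K⦄ (h1 : o ≤ a) (h2 : a ≤ e) (v : H o),
      U h2 (U h1 v) = U (h1.trans h2) v

attribute [instance] NetRep.nacg NetRep.ips NetRep.cpl

namespace NetRep

variable {N : CStarNet.{u, v} K}

def hCast (R : NetRep.{u, v, w} N) {a b : K} (h : a = b) : R.H a ≃ₗᵢ[ℂ] R.H b := by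
  subst h; exact LinearIsometryEquiv.refl ℂ _

/-- The unitary `U_b` associated with a 1-simplex `b`. -/
def U1 (R : NetRep.{u, v, w} N) (s : Simplex1 K) : R.H s.d1 ≃ₗᵢ[ℂ] R.H s.d0 :=
  (R.U s.le1).trans (R.U s.le0).symm

/-- The unitary `U_p` associated with a path `p`. -/
def Upath (R : NetRep.{u, v, w} N) {a : K} : {b : K} → SPath K a b → (R.H a ≃ₗᵢ[ℂ] R.H b)
  | _, .nil _ => LinearIsometryEquiv.refl ℂ _
  | _, .cons p s h1 h0 =>
      (Upath R p).trans (((R.hCast h1.symm).trans (R.U1 s)).trans (R.hCast h0))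

/-- A representation is faithful if all the `π_o` are injective. -/
def Faithful (R : NetRep.{u, v, w} N) : Prop := ∀ o, Function.Injective (R.rep o)

/-- A representation vanishes if all the `π_o` are zero. -/
def Vanishes (R : NetRep.{u, v, w} N) : Prop := ∀ (o) (x : N.fib o), R.rep o x = 0

/-- Quasi (topologically) trivial representation: the loop unitaries commute with the
representation of the corresponding fibre. -/
def QuasiTrivial (R : NetRep.{u, v, w} N) : Prop :=
  ∀ (o : K) (p : SPath K o o) (x : N.fib o) (v : R.H o),
    R.Upath p (R.rep o x v) = R.rep o x (R.Upath p v)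

/-- Unitary equivalence of representations. -/
def Equiv (R : NetRep.{u, v, w} N) (R' : NetRep.{u, v, w'} N) : Prop :=
  ∃ T : ∀ o, R.H o ≃ₗᵢ[ℂ] R'.H o,
    (∀ (o) (x : N.fib o) (v : R.H o), T o (R.rep o x v) = R'.rep o x (T o v)) ∧
    (∀ ⦃o a : K⦄ (h : o ≤ a) (v : R.H o), T a (R.U h v) = R'.U h (T o v))

end NetRep

/-- The representation of `N` obtained by composing a representation of `NB` with
a morphism `ε : N → NB` of nets over `K`. -/
def NetRep.ofEnvelope {N : CStarNet.{u, v} K} {NB : CStarNet.{u, v'} K}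
    (ε : ∀ o, N.fib o →⋆ₐ[ℂ] NB.fib o) (hε : IsNetMorphismOver N NB ε)
    (R : NetRep.{u, v', w} NB) : NetRep.{u, v, w} N where
  H := R.H
  rep o := (R.rep o).comp (ε o)
  U := R.U
  intertwine := by
    intro o a h x v
    show R.U h (R.rep o (ε o x) v) = R.rep a (ε a (N.incl h x)) (R.U h v)
    rw [hε h x]
    exact R.intertwine h (ε o x) v
  U_comp := R.U_comp

/-- Covariant representations of the holonomy dynamical system of a C*-net bundle,
with the action of the fundamental group presented at the level of loops. -/
structure CovRep (N : CStarNet.{u, v} K) (hN : IsCStarNetBundle N) (o : K) where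
  H : Type w
  [nacg : NormedAddCommGroup H]
  [ips : InnerProductSpace ℂ H]
  [cpl : CompleteSpace H]
  eta : N.fib o →⋆ₐ[ℂ] (H →L[ℂ] H)
  V : SPath K o o → (H ≃ₗᵢ[ℂ] H)
  V_hom : ∀ p q : SPath K o o, SPath.Homotopic p q → V p = V q
  V_mul : ∀ p q : SPath K o o, V (p.comp q) = (V p).trans (V q)
  cov : ∀ (p : SPath K o o) (x : N.fib o) (v : H),
      eta (N.holPath hN p x) (V p v) = V p (eta x v)

attribute [instance] CovRep.nacg CovRep.ips CovRep.cpl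

/-- Equivalence of covariant representations. -/
def CovRep.Equiv {N : CStarNet.{u, v} K} {hN : IsCStarNetBundle N} {o : K}
    (C : CovRep.{u, v, w} N hN o) (C' : CovRep.{u, v, w'} N hN o) : Prop :=
  ∃ W : C.H ≃ₗᵢ[ℂ] C'.H,
    (∀ (x : N.fib o) (v : C.H), W (C.eta x v) = C'.eta x (W v)) ∧
    (∀ (p : SPath K o o) (v : C.H), W (C.V p v) = C'.V p (W v))

/-- A representation of a single C*-algebra on a Hilbert space. -/
structure AlgRep (A : Type v) [CStarAlgebra A] where
  H : Type w
  [nacg : NormedAddCommGroup H]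
  [ips : InnerProductSpace ℂ H]
  [cpl : CompleteSpace H]
  rho : A →⋆ₐ[ℂ] (H →L[ℂ] H)

attribute [instance] AlgRep.nacg AlgRep.ips AlgRep.cpl

/-- A Hilbert space representation (on a single Hilbert space) of the restriction of
a net of C*-algebras to a subset `P` of the poset. -/
structure SubNetHSRep (N : CStarNet.{u, v} K) (P : Set K) where
  H : Type w
  [nacg : NormedAddCommGroup H]
  [ips : InnerProductSpace ℂ H]
  [cpl : CompleteSpace H]
  rep : ∀ o ∈ P, N.fib o →⋆ₐ[ℂ] (H →L[ℂ] H)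
  compat : ∀ ⦃a o : K⦄ (ha : a ∈ P) (ho : o ∈ P) (h : a ≤ o) (x : N.fib a),
      rep o ho (N.incl h x) = rep a ha x

attribute [instance] SubNetHSRep.nacg SubNetHSRep.ips SubNetHSRep.cpl

/-! ### Amenability -/

/-- The space `ℓ∞(G)` of bounded real-valued functions on `G`. -/
def BddFuns (G : Type w) : Submodule ℝ (G → ℝ) where
  carrier := {f | ∃ C, ∀ g, |f g| ≤ C}
  add_mem' := by
    rintro f g ⟨C, hC⟩ ⟨D, hD⟩
    exact ⟨C + D, fun x => (abs_add_le _ _).trans (add_le_add (hC x) (hD x))⟩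
  zero_mem' := ⟨0, by simp⟩
  smul_mem' := by
    rintro c f ⟨C, hC⟩
    refine ⟨|c| * C, fun x => ?_⟩
    have : |c • f x| = |c| * |f x| := by simp [abs_mul]
    calc |(c • f) x| = |c| * |f x| := by simpa using this
      _ ≤ |c| * C := mul_le_mul_of_nonneg_left (hC x) (abs_nonneg c)

def BddFuns.const (G : Type w) (r : ℝ) : BddFuns G :=
  ⟨fun _ => r, ⟨|r|, fun _ => le_rfl⟩⟩

def BddFuns.rtrans {G : Type w} [Group G] (f : BddFuns G) (h : G) : BddFuns G :=
  ⟨fun g => (f : G → ℝ) (g * h), by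
    obtain ⟨C, hC⟩ := f.2
    exact ⟨C, fun g => hC (g * h)⟩⟩

/-- A right invariant mean on `ℓ∞(G)`. -/
structure RightInvariantMean (G : Type w) [Group G] where
  mean : BddFuns G →ₗ[ℝ] ℝ
  nonneg : ∀ f : BddFuns G, (∀ g, 0 ≤ (f : G → ℝ) g) → 0 ≤ mean f
  normalized : mean (BddFuns.const G 1) = 1
  rightInv : ∀ (f : BddFuns G) (h : G), mean (BddFuns.rtrans f h) = mean f

/-- Amenability of a (discrete) group. -/
def IsAmenable (G : Type w) [Group G] : Prop := Nonempty (RightInvariantMean G)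

/-! ### Covariant nets -/

/-- A `G`-covariant structure on a net of C*-algebras, where `G` acts on the poset `K`
by order preserving bijections. -/
structure CovariantNet {G : Type w} [Group G] [MulAction G K]
    (hord : ∀ (g : G) (a b : K), a ≤ b → g • a ≤ g • b) (N : CStarNet.{u, v} K) where
  act : ∀ (g : G) (o : K), N.fib o ≃⋆ₐ[ℂ] N.fib (g • o)
  act_mul : ∀ (g h : G) (o : K) (x : N.fib o),
      N.fibCast (mul_smul h g o) (act (h * g) o x) = act h (g • o) (act g o x)
  act_incl : ∀ (g : G) ⦃a o : K⦄ (hao : a ≤ o) (x : N.fib a),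
      act g o (N.incl hao x) = N.incl (hord g a o hao) (act g a x)

/-- A `G`-invariant state of a `G`-covariant net. -/
def NetState.Invariant {G : Type w} [Group G] [MulAction G K]
    {hord : ∀ (g : G) (a b : K), a ≤ b → g • a ≤ g • b} {N : CStarNet.{u, v} K}
    (α : CovariantNet hord N) (ω : NetState N) : Prop :=
  ∀ (g : G) (o : K) (x : N.fib o), (ω.st (g • o)).lin (α.act g o x) = (ω.st o).lin x

/-! ### The generalized Čech cocycle -/

/-- A 1-simplex of the simplicial set `Σ°_*(K)`: two vertices and a nonempty support
`F` lying below both of them. -/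
structure CechSimplex1 (K : Type u) [PartialOrder K] : Type u where
  F : Set K
  hne : F.Nonempty
  src : K
  tgt : K
  hsrc : ∀ a ∈ F, a ≤ src
  htgt : ∀ a ∈ F, a ≤ tgt

def CechSimplex1.swap (s : CechSimplex1 K) : CechSimplex1 K :=
  ⟨s.F, s.hne, s.tgt, s.src, s.htgt, s.hsrc⟩

/-- `A^F_o`: the C*-subalgebra of the fibre over `o` generated by the images of the
fibres over the elements of `F`. -/
def CStarNet.fibGen (N : CStarNet.{u, v} K) (F : Set K) (o : K) (hF : ∀ a ∈ F, a ≤ o) :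
    StarSubalgebra ℂ (N.fib o) :=
  (StarAlgebra.adjoin ℂ (⋃ a, ⋃ h : a ∈ F, Set.range (N.incl (hF a h)))).topologicalClosure

theorem CStarNet.mem_fibGen (N : CStarNet.{u, v} K) {F : Set K} {o : K}
    (hF : ∀ a ∈ F, a ≤ o) {a : K} (ha : a ∈ F) (x : N.fib a) :
    N.incl (hF a ha) x ∈ N.fibGen F o hF :=
  StarSubalgebra.le_topologicalClosure _
    (StarAlgebra.subset_adjoin ℂ _
      (Set.mem_iUnion.2 ⟨a, Set.mem_iUnion.2 ⟨ha, Set.mem_range_self x⟩⟩))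

/-- A generalized Čech cocycle of the net `N` defined over the collection `D` of
1-simplices of `Σ°_*(K)`. -/
structure CechCocycle (N : CStarNet.{u, v} K) (D : Set (CechSimplex1 K)) where
  zeta : ∀ s ∈ D, (N.fibGen s.F s.src s.hsrc ≃⋆ₐ[ℂ] N.fibGen s.F s.tgt s.htgt)
  compat : ∀ (s : CechSimplex1 K) (hs : s ∈ D) ⦃a : K⦄ (ha : a ∈ s.F) (x : N.fib a),
      (zeta s hs ⟨N.incl (s.hsrc a ha) x, N.mem_fibGen s.hsrc ha x⟩ : N.fib s.tgt)
        = N.incl (s.htgt a ha) x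

/-- The domain of the Čech cocycle of a net: the union of all the domains over which
a Čech cocycle of the net exists. -/
def CechDomain (N : CStarNet.{u, v} K) : Set (CechSimplex1 K) :=
  {s | ∃ D : Set (CechSimplex1 K), Nonempty (CechCocycle N D) ∧ s ∈ D}


/-- A representation of a C*-net bundle and a covariant representation of its holonomy
dynamical system correspond to each other. -/
def MatchesCov {N : CStarNet.{u, v} K} {hN : IsCStarNetBundle N} {o : K}
    (R : NetRep.{u, v, w} N) (C : CovRep.{u, v, w'} N hN o) : Prop :=
  ∃ W : R.H o ≃ₗᵢ[ℂ] C.H,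
    (∀ (x : N.fib o) (v : R.H o), W (R.rep o x v) = C.eta x (W v)) ∧
    (∀ (p : SPath K o o) (v : R.H o), W (R.Upath p v) = C.V p (W v))

/-!
Over a simply connected poset the holonomy of a C*-net bundle is path independent, so every
fibre `NB_o` of the enveloping net bundle, with the maps `ε_a` transported to `o`, is a cocone
of the net. Testing the envelope against constant net bundles shows that this cocone has
Fredenhagen's universal property. Universal cocones are unique up to isomorphism, which gives
isomorphisms `NB_o ≃ A^u`; their compatibility with the inclusions is again forced by
uniqueness. The second claim is the same uniqueness of universal cocones.
-/

theorem SPath.homotopic_of_simplyConnected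
    (hsc : ∀ (o : K) (p : SPath K o o), SPath.Homotopic p (SPath.nil o))
    {a b : K} (p q : SPath K a b) : SPath.Homotopic p q := by
  have h := SPath.Homotopic.comp_congr (hsc a (p.comp q.reverse)) (SPath.Homotopic.refl q)
  rw [SPath.comp_assoc, SPath.nil_comp] at h
  exact (SPath.Homotopic.comp_congr (.refl p) (SPath.reverse_comp_self q).symm).trans h

namespace CStarNet

section Holonomy

variable (N : CStarNet.{u, v} K) (hN : IsCStarNetBundle N)

theorem incl_refl_apply {o : K} (h : o ≤ o) (x : N.fib o) : N.incl h x = x :=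
  N.incl_injective h (N.incl_comp h h x)

theorem incl_hol1 (s : Simplex1 K) (x : N.fib s.d1) :
    N.incl s.le0 (N.hol1 hN s x) = N.incl s.le1 x :=
  (N.holEquiv hN s.le0).apply_symm_apply _

theorem incl_holPath_of_suppLE {o a b : K} (ha : a ≤ o) (hb : b ≤ o) (p : SPath K a b)
    (hp : p.SuppLE o) (x : N.fib a) : N.incl hb (N.holPath hN p x) = N.incl ha x := by
  induction p with
  | nil => rfl
  | cons p s h1 h0 ih =>
      subst h1 h0
      calc N.incl hb (N.hol1 hN s (N.holPath hN p x))
          = N.incl hp.2 (N.incl s.le0 (N.hol1 hN s (N.holPath hN p x))) :=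
            (N.incl_comp _ _ _).symm
        _ = N.incl hp.2 (N.incl s.le1 (N.holPath hN p x)) := by rw [incl_hol1]
        _ = N.incl ha x := (N.incl_comp _ _ _).trans (ih _ hp.1)

theorem holPath_eq_of_suppLE {o a b : K} (ha : a ≤ o) (hb : b ≤ o) {p q : SPath K a b}
    (hp : p.SuppLE o) (hq : q.SuppLE o) (x : N.fib a) :
    N.holPath hN p x = N.holPath hN q x :=
  N.incl_injective hb ((N.incl_holPath_of_suppLE hN ha hb p hp x).trans
    (N.incl_holPath_of_suppLE hN ha hb q hq x).symm)

theorem holPath_comp {a b c : K} (p : SPath K a b) (q : SPath K b c) (x : N.fib a) :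
    N.holPath hN (p.comp q) x = N.holPath hN q (N.holPath hN p x) := by
  induction q with
  | nil => rfl
  | cons q s h1 h0 ih =>
      subst h1 h0
      exact congrArg (N.hol1 hN s) ih

theorem holPath_homotopic {a b : K} {p q : SPath K a b} (h : p.Homotopic q) (x : N.fib a) :
    N.holPath hN p x = N.holPath hN q x := by
  induction h with
  | refl => rfl
  | symm _ ih => exact (ih x).symm
  | trans _ _ ih₁ ih₂ => exact (ih₁ x).trans (ih₂ x)
  | comp_congr _ _ ihp ihq => rw [holPath_comp, holPath_comp, ihp, ihq]
  | degen s h0 h1 hs =>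
      exact N.holPath_eq_of_suppLE hN le_rfl le_rfl (p := .nil _) (q := .single s h1 h0)
        trivial ⟨trivial, hs.le⟩ x
  | triangle c h1 h0 =>
      exact N.holPath_eq_of_suppLE hN (h1 ▸ c.d2.le1.trans c.le2) (h0 ▸ c.d0.le0.trans c.le0)
        (p := (SPath.single c.d2 h1 rfl).comp (SPath.single c.d0 c.h10 h0))
        (q := SPath.single c.d1 (c.h11.trans h1) (c.h00.symm.trans h0))
        (SPath.SuppLE.comp ⟨trivial, c.le2⟩ ⟨trivial, c.le0⟩) ⟨trivial, c.le1⟩ x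

theorem holPath_nervePath {o a : K} (h : o ≤ a) (x : N.fib o) :
    N.holPath hN (SPath.nervePath h) x = N.incl h x :=
  (N.incl_refl_apply le_rfl _).symm.trans
    (N.incl_holPath_of_suppLE hN h le_rfl (SPath.nervePath h) ⟨trivial, le_rfl⟩ x)

def transport (hconn : ∀ a b : K, Nonempty (SPath K a b)) (a b : K) :
    N.fib a ≃⋆ₐ[ℂ] N.fib b :=
  N.holPath hN (hconn a b).some

variable {N hN} (hconn : ∀ a b : K, Nonempty (SPath K a b))

theorem transport_apply_eq_holPath
    (hsc : ∀ (o : K) (p : SPath K o o), SPath.Homotopic p (SPath.nil o))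
    {a b : K} (p : SPath K a b) (x : N.fib a) :
    N.transport hN hconn a b x = N.holPath hN p x :=
  N.holPath_homotopic hN (SPath.homotopic_of_simplyConnected hsc _ p) x

theorem transport_self (hsc : ∀ (o : K) (p : SPath K o o), SPath.Homotopic p (SPath.nil o))
    {a : K} (x : N.fib a) : N.transport hN hconn a a x = x :=
  transport_apply_eq_holPath hconn hsc (.nil a) x

theorem transport_transport
    (hsc : ∀ (o : K) (p : SPath K o o), SPath.Homotopic p (SPath.nil o))
    {a b c : K} (x : N.fib a) :
    N.transport hN hconn b c (N.transport hN hconn a b x) = N.transport hN hconn a c x :=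
  (N.holPath_comp hN _ _ x).symm.trans (transport_apply_eq_holPath hconn hsc _ x).symm

theorem incl_eq_transport (hsc : ∀ (o : K) (p : SPath K o o), SPath.Homotopic p (SPath.nil o))
    {a b : K} (h : a ≤ b) (x : N.fib a) : N.incl h x = N.transport hN hconn a b x :=
  (N.holPath_nervePath hN h x).symm.trans (transport_apply_eq_holPath hconn hsc _ x).symm

end Holonomy

section Cocones

def IsCocone (N : CStarNet.{u, v} K) {B : Type w} [CStarAlgebra B]
    (χ : ∀ o, N.fib o →⋆ₐ[ℂ] B) : Prop :=
  ∀ ⦃o o' : K⦄ (h : o ≤ o') (x : N.fib o), χ o' (N.incl h x) = χ o x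

def IsUniversalCocone (N : CStarNet.{u, v} K) (A : Type w) [CStarAlgebra A]
    (ψ : ∀ o, N.fib o →⋆ₐ[ℂ] A) : Prop :=
  N.IsCocone ψ ∧ ∀ (B : Type w) [CStarAlgebra B] (χ : ∀ o, N.fib o →⋆ₐ[ℂ] B),
    N.IsCocone χ → ∃! ρ : A →⋆ₐ[ℂ] B, ∀ o x, ρ (ψ o x) = χ o x

variable {N : CStarNet.{u, v} K}

theorem IsCocone.map_holPath (hN : IsCStarNetBundle N) {B : Type w} [CStarAlgebra B]
    {φ : ∀ o, N.fib o →⋆ₐ[ℂ] B} (hφ : N.IsCocone φ) {a b : K} (p : SPath K a b)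
    (x : N.fib a) : φ b (N.holPath hN p x) = φ a x := by
  induction p with
  | nil => rfl
  | cons p s h1 h0 ih =>
      subst h1 h0
      calc φ s.d0 (N.hol1 hN s (N.holPath hN p x))
          = φ s.supp (N.incl s.le0 (N.hol1 hN s (N.holPath hN p x))) := (hφ _ _).symm
        _ = φ s.supp (N.incl s.le1 (N.holPath hN p x)) := by rw [incl_hol1]
        _ = φ a x := (hφ _ _).trans ih

theorem IsUniversalCocone.hom_ext {A B : Type w} [CStarAlgebra A] [CStarAlgebra B]
    {ψ : ∀ o, N.fib o →⋆ₐ[ℂ] A} (hψ : N.IsUniversalCocone A ψ) {f g : A →⋆ₐ[ℂ] B}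
    (h : ∀ o x, f (ψ o x) = g (ψ o x)) : f = g :=
  (hψ.2 B (fun o => g.comp (ψ o)) fun _ _ h x => congrArg g (hψ.1 h x)).unique h
    fun _ _ => rfl

theorem IsUniversalCocone.exists_starAlgEquiv {A L : Type w} [CStarAlgebra A]
    [CStarAlgebra L] {ψ : ∀ o, N.fib o →⋆ₐ[ℂ] A} {χ : ∀ o, N.fib o →⋆ₐ[ℂ] L}
    (hψ : N.IsUniversalCocone A ψ) (hχ : N.IsUniversalCocone L χ) :
    ∃ e : A ≃⋆ₐ[ℂ] L, ∀ o x, e (ψ o x) = χ o x := by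
  obtain ⟨f, hf, -⟩ := hψ.2 L χ hχ.1
  obtain ⟨g, hg, -⟩ := hχ.2 A ψ hψ.1
  refine ⟨StarAlgEquiv.ofStarAlgHom f g (hψ.hom_ext fun o x => ?_)
    (hχ.hom_ext fun o x => ?_), hf⟩
  · change g (f (ψ o x)) = ψ o x
    rw [hf, hg]
  · change f (g (χ o x)) = χ o x
    rw [hg, hf]

end Cocones

def const (B : Type w) [CStarAlgebra B] : CStarNet.{u, w} K where
  fib _ := B
  incl _ _ _ := StarAlgHom.id ℂ B
  incl_injective _ _ _ := Function.injective_id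
  incl_comp _ _ _ _ _ _ := rfl

theorem isCStarNetBundle_const (B : Type w) [CStarAlgebra B] :
    IsCStarNetBundle (const (K := K) B) :=
  fun _ _ _ => Function.bijective_id

end CStarNet

open CStarNet

namespace IsEnvelope

variable {N : CStarNet.{u, v} K} {NB : CStarNet.{u, max u v} K}
  {ε : ∀ o, N.fib o →⋆ₐ[ℂ] NB.fib o}

theorem existsUnique_cocone (henv : IsEnvelope N NB ε) {B : Type (max u v)} [CStarAlgebra B]
    {χ : ∀ o, N.fib o →⋆ₐ[ℂ] B} (hχ : N.IsCocone χ) :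
    ∃! φ : ∀ o, NB.fib o →⋆ₐ[ℂ] B, NB.IsCocone φ ∧ ∀ o x, φ o (ε o x) = χ o x :=
  henv.2.2 (const B) (isCStarNetBundle_const B) χ hχ

theorem isUniversalCocone_fib (hconn : ∀ a b : K, Nonempty (SPath K a b))
    (hsc : ∀ (o : K) (p : SPath K o o), SPath.Homotopic p (SPath.nil o))
    (henv : IsEnvelope N NB ε) (o : K) :
    N.IsUniversalCocone (NB.fib o)
      fun a => (NB.transport henv.1 hconn a o).toStarAlgHom.comp (ε a) := by
  refine ⟨fun a a' h x => ?_, fun B _ χ hχ => ?_⟩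
  · change NB.transport henv.1 hconn a' o (ε a' (N.incl h x))
      = NB.transport henv.1 hconn a o (ε a x)
    rw [henv.2.1 h x, incl_eq_transport (hN := henv.1) hconn hsc, transport_transport hconn hsc]
  obtain ⟨φ, ⟨hφ, hφε⟩, hφ_unique⟩ := henv.existsUnique_cocone hχ
  refine ⟨φ o, fun a x => ?_, fun ρ hρ => ?_⟩
  · change φ o (NB.holPath henv.1 _ (ε a x)) = χ a x
    rw [hφ.map_holPath, hφε]
  have hρφ : (fun b => ρ.comp (NB.transport henv.1 hconn b o).toStarAlgHom) = φ := by
    refine hφ_unique _ ⟨fun b b' h y => ?_, hρ⟩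
    change ρ (NB.transport henv.1 hconn b' o (NB.incl h y))
      = ρ (NB.transport henv.1 hconn b o y)
    rw [incl_eq_transport (hN := henv.1) hconn hsc, transport_transport hconn hsc]
  ext y
  rw [← hρφ]
  exact congrArg ρ (transport_self hconn hsc y).symm

theorem exists_starAlgEquiv_const (hconn : ∀ a b : K, Nonempty (SPath K a b))
    (hsc : ∀ (o : K) (p : SPath K o o), SPath.Homotopic p (SPath.nil o))
    (henv : IsEnvelope N NB ε) {Au : Type (max u v)} [CStarAlgebra Au]
    {ψ : ∀ o, N.fib o →⋆ₐ[ℂ] Au} (hψ : N.IsUniversalCocone Au ψ) :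
    ∃ ρ : ∀ o, NB.fib o ≃⋆ₐ[ℂ] Au,
      (∀ ⦃a o : K⦄ (h : a ≤ o) (x : NB.fib a), ρ o (NB.incl h x) = ρ a x) ∧
      ∀ (o : K) (x : N.fib o), ρ o (ε o x) = ψ o x := by
  choose ρ hρ using fun o => (henv.isUniversalCocone_fib hconn hsc o).exists_starAlgEquiv hψ
  refine ⟨ρ, fun a o h => ?_, fun o x => ?_⟩
  · have hext := (henv.isUniversalCocone_fib hconn hsc a).hom_ext
      (f := (ρ o).toStarAlgHom.comp (NB.incl h)) (g := (ρ a).toStarAlgHom) fun b x => by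
        change ρ o (NB.incl h (NB.transport henv.1 hconn b a (ε b x)))
          = ρ a (NB.transport henv.1 hconn b a (ε b x))
        rw [incl_eq_transport (hN := henv.1) hconn hsc, transport_transport hconn hsc]
        exact (hρ o b x).trans (hρ a b x).symm
    exact fun y => DFunLike.congr_fun hext y
  · have h := hρ o o x
    change ρ o (NB.transport henv.1 hconn o o (ε o x)) = ψ o x at h
    rwa [transport_self hconn hsc] at h

end IsEnvelope

/-- over a simply connected poset, the enveloping net bundle of a net of
C*-algebras is canonically isomorphic to the constant net bundle whose fibre is
Fredenhagen's universal C*-algebra; in particular, if the poset is upward directed,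
the universal C*-algebra is isomorphic to the C*-inductive limit of the net (i.e. to
any C*-algebra with the corresponding universal colimit property). -/
theorem statement_5 {K : Type u} [PartialOrder K]
    (hconn : ∀ a b : K, Nonempty (SPath K a b))
    (hsc : ∀ (o : K) (p : SPath K o o), SPath.Homotopic p (SPath.nil o))
    (N : CStarNet.{u, v} K)
    -- Fredenhagen's universal C*-algebra of the net
    (Au : Type (max u v)) [CStarAlgebra Au] (ψ : ∀ o, N.fib o →⋆ₐ[ℂ] Au)
    (hψ : ∀ ⦃o o' : K⦄ (h : o ≤ o') (x : N.fib o), ψ o' (N.incl h x) = ψ o x)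
    (hAu : ∀ (B : Type (max u v)) [CStarAlgebra B] (χ : ∀ o, N.fib o →⋆ₐ[ℂ] B),
      (∀ ⦃o o' : K⦄ (h : o ≤ o') (x : N.fib o), χ o' (N.incl h x) = χ o x) →
      ∃! ρ : Au →⋆ₐ[ℂ] B, ∀ o x, ρ (ψ o x) = χ o x)
    -- the enveloping net bundle of the net
    (NB : CStarNet.{u, max u v} K) (ε : ∀ o, N.fib o →⋆ₐ[ℂ] NB.fib o)
    (henv : IsEnvelope N NB ε) :
    -- canonical isomorphism with the constant net bundle with fibre Au
    (∃ ρ : ∀ o, NB.fib o ≃⋆ₐ[ℂ] Au,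
       (∀ ⦃a o : K⦄ (h : a ≤ o) (x : NB.fib a), ρ o (NB.incl h x) = ρ a x) ∧
       (∀ (o : K) (x : N.fib o), ρ o (ε o x) = ψ o x)) ∧
    -- if K is upward directed, Au is isomorphic to the C*-inductive limit
    ((∀ a b : K, ∃ c, a ≤ c ∧ b ≤ c) →
      ∀ (L : Type (max u v)) [CStarAlgebra L] (χ : ∀ o, N.fib o →⋆ₐ[ℂ] L),
        (∀ ⦃o o' : K⦄ (h : o ≤ o') (x : N.fib o), χ o' (N.incl h x) = χ o x) →
        (∀ (B : Type (max u v)) [CStarAlgebra B] (χ' : ∀ o, N.fib o →⋆ₐ[ℂ] B),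
          (∀ ⦃o o' : K⦄ (h : o ≤ o') (x : N.fib o), χ' o' (N.incl h x) = χ' o x) →
          ∃! ρ : L →⋆ₐ[ℂ] B, ∀ o x, ρ (χ o x) = χ' o x) →
        ∃ e : Au ≃⋆ₐ[ℂ] L, ∀ o x, e (ψ o x) = χ o x) := by
  have hψu : N.IsUniversalCocone Au ψ := ⟨hψ, hAu⟩
  exact ⟨henv.exists_starAlgEquiv_const hconn hsc hψu,
    fun _ L _ χ hχ hL => hψu.exists_starAlgEquiv ⟨hχ, hL⟩⟩

end AQFT
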